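/- Let E = EuclideanSpace ℝ (Fin d) with d ≥ 1, let b ∈ E and α ∈ ℝ with α ≠ 0, and define the world function Σ(x,x') = ⟨b, x − x'⟩·(1 + α‖x − x'‖²) + ½‖x − x'‖². Let y ∈ E with y ≠ 0 and ⟨b,y⟩ ≠ 0. Then the neutral first order tube through 0 and y degenerates to the set of its two basic points: { x ∈ E : |0y|²·|0x|² − (0y.0x)(0x.0y) = 0 } = {0, y}. (In the proper Euclidean case with nonzero α the first order tube degenerates to the pair of basic points.) -/

import Mathlib

set_option maxHeartbeats 800000


/-- The scalar Σ-product `(P₀P₁.Q₀Q₁) = Σ(P₀,Q₁) − Σ(P₁,Q₁) − Σ(P₀,Q₀) + Σ(P₁,Q₀)`. -/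
def ssp {Ω : Type} (W : Ω → Ω → ℝ) (P0 P1 Q0 Q1 : Ω) : ℝ :=
  W P0 Q1 - W P1 Q1 - W P0 Q0 + W P1 Q0

/-- The world function `Σ(x,x') = ⟨b, x − x'⟩·(1 + α‖x − x'‖²) + ½‖x − x'‖²` of a proper
Euclidean space with the anisotropy field `aᵢ = bᵢ(1 + α f(ξ²))`, `f(ξ²) = ξ²`. -/
noncomputable def Wnl (d : ℕ) (b : EuclideanSpace ℝ (Fin d)) (α : ℝ) :
    EuclideanSpace ℝ (Fin d) → EuclideanSpace ℝ (Fin d) → ℝ :=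
  fun x x' => (inner ℝ b (x - x') : ℝ) * (1 + α * ‖x - x'‖ ^ 2) + (1 / 2) * ‖x - x'‖ ^ 2

/-- In the proper Euclidean case with a nonzero cubic antisymmetric component
(`α ≠ 0`), the neutral first order tube through `0` and `y` degenerates to the set
of its two basic points `{0, y}`. -/
theorem neutral_tube_degenerates_to_basic_points
    (d : ℕ) (hd : 1 ≤ d) (b y : EuclideanSpace ℝ (Fin d)) (α : ℝ)
    (hα : α ≠ 0) (hy : y ≠ 0) (hby : (inner ℝ b y : ℝ) ≠ 0) :
    {x : EuclideanSpace ℝ (Fin d) |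
        ssp (Wnl d b α) 0 y 0 y * ssp (Wnl d b α) 0 x 0 x
          - ssp (Wnl d b α) 0 y 0 x * ssp (Wnl d b α) 0 x 0 y = 0} =
      {0, y} := by
  ext x
  set bx : ℝ := inner ℝ b x with hbx
  set byv : ℝ := inner ℝ b y with hbyv
  set xy : ℝ := inner ℝ x y with hxy
  set nx : ℝ := ‖x‖ ^ 2 with hnx
  set ny : ℝ := ‖y‖ ^ 2 with hny
  have hnxy : ‖x - y‖ ^ 2 = nx - 2 * xy + ny := by
    rw [hnx, hxy, hny, @norm_sub_sq_real]
  have hbxy : (inner ℝ b (x - y) : ℝ) = bx - byv := by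
    rw [hbx, hbyv, inner_sub_right]
  have key : ssp (Wnl d b α) 0 y 0 y * ssp (Wnl d b α) 0 x 0 x
          - ssp (Wnl d b α) 0 y 0 x * ssp (Wnl d b α) 0 x 0 y
      = (nx * ny - xy ^ 2)
        + (α * ((bx - byv) * (nx - 2 * xy + ny) - bx * nx + byv * ny)) ^ 2 := by
    simp only [ssp, Wnl, sub_zero, zero_sub, sub_self, norm_zero, norm_neg,
      inner_zero_right, inner_neg_right, hnxy, hbxy]
    rw [show ((inner ℝ b x : ℝ)) = bx from rfl, show ((inner ℝ b y : ℝ)) = byv from rfl,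
      show (‖x‖ : ℝ) ^ 2 = nx from rfl, show (‖y‖ : ℝ) ^ 2 = ny from rfl]
    have h1 : ‖y - x‖ ^ 2 = nx - 2 * xy + ny := by
      rw [← norm_neg, neg_sub]; exact hnxy
    have h2 : (inner ℝ b (y - x) : ℝ) = byv - bx := by
      rw [hbx, hbyv, inner_sub_right]
    rw [h1, h2]; ring
  have hcs : xy ^ 2 ≤ nx * ny := by
    have h := real_inner_mul_inner_self_le x y
    rw [real_inner_self_eq_norm_sq, real_inner_self_eq_norm_sq] at h
    rw [hxy, hnx, hny]; nlinarith [h]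
  have hny0 : ny ≠ 0 := by
    rw [hny]; exact pow_ne_zero 2 (norm_ne_zero_iff.mpr hy)
  constructor
  · intro h
    simp only [Set.mem_setOf_eq] at h
    rw [key] at h
    have h1 : nx * ny - xy ^ 2 = 0 := by nlinarith [sq_nonneg (α * ((bx - byv) * (nx - 2 * xy + ny) - bx * nx + byv * ny))]
    have h2 : (bx - byv) * (nx - 2 * xy + ny) - bx * nx + byv * ny = 0 := by
      have : (α * ((bx - byv) * (nx - 2 * xy + ny) - bx * nx + byv * ny)) ^ 2 = 0 := by nlinarith
      have := pow_eq_zero_iff (n := 2) (by norm_num) |>.mp this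
      exact (mul_eq_zero.mp this).resolve_left hα
    by_cases hx0 : x = 0
    · left; exact hx0
    · right
      -- Cauchy-Schwarz equality: y = r • x
      have habs : |(inner ℝ x y : ℝ)| = ‖x‖ * ‖y‖ := by
        have h3 : xy ^ 2 = nx * ny := by linarith
        have : |xy| ^ 2 = (‖x‖ * ‖y‖) ^ 2 := by
          rw [sq_abs, h3, hnx, hny]; ring
        have := abs_nonneg xy
        nlinarith [norm_nonneg x, norm_nonneg y, mul_nonneg (norm_nonneg x) (norm_nonneg y)]
      rw [← Real.norm_eq_abs, norm_inner_eq_norm_iff hx0 hy] at habs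
      obtain ⟨r, hr, hyr⟩ := habs
      have hxty : x = r⁻¹ • y := by
        rw [hyr, smul_smul, inv_mul_cancel₀ hr, one_smul]
      set t : ℝ := r⁻¹ with ht
      have ht0 : t ≠ 0 := inv_ne_zero hr
      -- substitute
      have e1 : bx = t * byv := by
        rw [hbx, hbyv, hxty, inner_smul_right]
      have e2 : nx = t ^ 2 * ny := by
        rw [hnx, hny, hxty, norm_smul]; simp [mul_pow]
      have e3 : xy = t * ny := by
        rw [hxy, hny, hxty, real_inner_smul_left, real_inner_self_eq_norm_sq]
      rw [e1, e2, e3] at h2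
      have h2' : byv * ny * (3 * t * (1 - t)) = 0 := by nlinarith [h2]
      have : 3 * t * (1 - t) = 0 := by
        rcases mul_eq_zero.mp h2' with h | h
        · exact absurd h (mul_ne_zero hby hny0)
        · exact h
      have ht1 : t = 1 := by
        rcases mul_eq_zero.mp this with h | h
        · rcases mul_eq_zero.mp h with h | h
          · norm_num at h
          · exact absurd h ht0
        · linarith
      simp only [hxty, ht1, one_smul, Set.mem_singleton_iff]
  · intro h
    simp only [Set.mem_setOf_eq]
    rw [key]
    rcases h with h | h
    · subst h
      have e1 : bx = 0 := by simp [hbx]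
      have e2 : nx = 0 := by simp [hnx]
      have e3 : xy = 0 := by simp [hxy]
      rw [e1, e2, e3]; ring
    · subst h
      have e1 : bx = byv := rfl
      have e2 : nx = ny := rfl
      have e3 : xy = ny := by
        rw [hxy, hny, real_inner_self_eq_norm_sq]
      rw [e1, e2, e3]; ring
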